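/- Let S be an M×N real matrix and let H be a positive integer with H ≥ rank(S). Then the nuclear norm of S satisfies ‖S‖_* = min{ (‖U‖_F² + ‖V‖_F²)/2 : U is M×H, V is N×H, and U Vᵀ = S }, and this minimum is attained by some pair (U, V). -/

import Mathlib

open Matrix BigOperators

/-- The singular values of a real `M × N` matrix, sorted in decreasing order and
indexed by `Fin N` (the square roots of the eigenvalues of `XᵀX`). -/
noncomputable def svalAux {M N : ℕ} (X : Matrix (Fin M) (Fin N) ℝ) : Fin N → ℝ :=
  fun r => Real.sqrt
    (((Matrix.isHermitian_conjTranspose_mul_self X).eigenvalues ∘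
      Tuple.sort ((Matrix.isHermitian_conjTranspose_mul_self X).eigenvalues)) r.rev)

/-- The `r`-th singular value (0-indexed, decreasing) of a real matrix, `0` if `r ≥ N`. -/
noncomputable def sval {M N : ℕ} (X : Matrix (Fin M) (Fin N) ℝ) (r : ℕ) : ℝ :=
  if h : r < N then svalAux X ⟨r, h⟩ else 0

/-- Squared Frobenius norm. -/
noncomputable def frobSq {M N : ℕ} (X : Matrix (Fin M) (Fin N) ℝ) : ℝ :=
  ∑ i, ∑ j, (X i j) ^ 2

/-- Nuclear norm: sum of the singular values. -/
noncomputable def nucNorm {M N : ℕ} (X : Matrix (Fin M) (Fin N) ℝ) : ℝ :=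
  ∑ r ∈ Finset.range (min M N), sval X r

/-!
Let `b_i` be an orthonormal eigenbasis of `Sᵀ S` with eigenvalues `λ_i`. The vectors `S b_i` are
orthogonal with `‖S b_i‖² = λ_i` and `S = ∑ (S b_i) b_iᵀ`, so on the support of `λ` the vectors
`u_i = S b_i / σ_i`, `σ_i = √λ_i`, are orthonormal and `⟪u_i, S b_i⟫ = σ_i`. If `S = U Vᵀ`, then
`∑ σ_i = ∑ ⟪Uᵀ u_i, Vᵀ b_i⟫ ≤ ∑ (‖Uᵀ u_i‖² + ‖Vᵀ b_i‖²) / 2`, and Bessel's inequality applied to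
each column of `U` and of `V` bounds this by `(‖U‖_F² + ‖V‖_F²) / 2`. Conversely, the at most
`rank S ≤ H` column pairs `√σ_i u_i`, `√σ_i b_i`, padded with zero columns, attain `∑ σ_i`.
-/

open scoped InnerProductSpace
open WithLp

theorem Antitone.apply_eq_zero_of_card_ne_zero_le {α : Type*} [PartialOrder α] [Zero α]
    [DecidableEq α] {n r : ℕ} {g : Fin n → α} (hg : Antitone g) (hg0 : ∀ t, 0 ≤ g t)
    (hr : r < n) (hcard : Fintype.card {t // g t ≠ 0} ≤ r) : g ⟨r, hr⟩ = 0 := by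
  by_contra hne
  have hsub : Finset.Iic ⟨r, hr⟩ ⊆ Finset.univ.filter (g · ≠ 0) := fun s hs =>
    Finset.mem_filter.mpr ⟨Finset.mem_univ s, fun h0 =>
      hne (le_antisymm (h0 ▸ hg (Finset.mem_Iic.mp hs)) (hg0 _))⟩
  have := Finset.card_le_card hsub
  rw [Fin.card_Iic, ← Fintype.card_subtype] at this
  exact absurd (this.trans hcard) (by simp)

section Gram

variable {M N : ℕ} (X : Matrix (Fin M) (Fin N) ℝ)

noncomputable abbrev gramEigenvalues : Fin N → ℝ :=
  (isHermitian_conjTranspose_mul_self X).eigenvalues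

noncomputable abbrev gramEigenbasis : OrthonormalBasis (Fin N) ℝ (EuclideanSpace ℝ (Fin N)) :=
  (isHermitian_conjTranspose_mul_self X).eigenvectorBasis

theorem gramEigenvalues_nonneg (i : Fin N) : 0 ≤ gramEigenvalues X i :=
  (posSemidef_conjTranspose_mul_self X).eigenvalues_nonneg i

theorem card_gramEigenvalues_ne_zero :
    Fintype.card {i // gramEigenvalues X i ≠ 0} = X.rank := by
  rw [← (isHermitian_conjTranspose_mul_self X).rank_eq_card_non_zero_eigs,
    rank_conjTranspose_mul_self]

theorem sval_eq_zero_of_rank_le {r : ℕ} (hr : X.rank ≤ r) : sval X r = 0 := by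
  unfold sval
  split_ifs with hrN
  · set σ := Tuple.sort (gramEigenvalues X)
    have hanti : Antitone fun t : Fin N => gramEigenvalues X (σ t.rev) :=
      fun s t hst => Tuple.monotone_sort (gramEigenvalues X) (Fin.rev_le_rev.mpr hst)
    have hcard : Fintype.card {t : Fin N // gramEigenvalues X (σ t.rev) ≠ 0} ≤ r := by
      rw [← card_gramEigenvalues_ne_zero] at hr
      refine le_trans (le_of_eq (Fintype.card_congr ?_)) hr
      exact (Fin.revPerm.trans σ).subtypeEquiv fun t => Iff.rfl
    change √(gramEigenvalues X (σ (⟨r, hrN⟩ : Fin N).rev)) = 0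
    rw [hanti.apply_eq_zero_of_card_ne_zero_le (fun _ => gramEigenvalues_nonneg X _) hrN hcard,
      Real.sqrt_zero]
  · rfl

theorem nucNorm_eq_sum_sqrt_gramEigenvalues :
    nucNorm X = ∑ i, √(gramEigenvalues X i) := by
  have hsub : ∑ r ∈ Finset.range (min M N), sval X r = ∑ r ∈ Finset.range N, sval X r := by
    refine Finset.sum_subset (Finset.range_subset_range.mpr (min_le_right M N)) fun r hr hrmin => ?_
    refine sval_eq_zero_of_rank_le X ((X.rank_le_height).trans ?_)
    simp only [Finset.mem_range] at hr hrmin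
    omega
  rw [nucNorm, hsub, ← Fin.sum_univ_eq_sum_range]
  set σ := Tuple.sort (gramEigenvalues X)
  calc ∑ t : Fin N, sval X t = ∑ t : Fin N, √(gramEigenvalues X (σ t.rev)) := by
        simp only [sval, Fin.is_lt, dif_pos, Fin.eta]; rfl
    _ = ∑ t, √(gramEigenvalues X (σ t)) := Fintype.sum_equiv Fin.revPerm _ _ fun _ => rfl
    _ = ∑ i, √(gramEigenvalues X i) := Fintype.sum_equiv σ _ _ fun _ => rfl

end Gram

section Factorization

variable {M N H : ℕ}

theorem frobSq_eq_sum_norm_sq_col (U : Matrix (Fin M) (Fin H) ℝ) :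
    frobSq U = ∑ h, ‖toLp 2 (Uᵀ h)‖ ^ 2 := by
  rw [frobSq, Finset.sum_comm]
  simp [EuclideanSpace.real_norm_sq_eq]

theorem inner_mul_transpose_mulVec (U : Matrix (Fin M) (Fin H) ℝ) (V : Matrix (Fin N) (Fin H) ℝ)
    (x : EuclideanSpace ℝ (Fin M)) (y : EuclideanSpace ℝ (Fin N)) :
    ⟪x, toLp 2 ((U * Vᵀ) *ᵥ y)⟫_ℝ = ∑ h, ⟪x, toLp 2 (Uᵀ h)⟫_ℝ * ⟪y, toLp 2 (Vᵀ h)⟫_ℝ := by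
  simp only [PiLp.inner_apply, RCLike.inner_apply, conj_trivial, mulVec, dotProduct, mul_apply,
    transpose_apply, Finset.sum_mul, Finset.mul_sum]
  rw [Finset.sum_comm]
  conv_lhs => enter [2, j]; rw [Finset.sum_comm]
  rw [Finset.sum_comm]
  exact Fintype.sum_congr _ _ fun h => Fintype.sum_congr _ _ fun j =>
    Fintype.sum_congr _ _ fun i => by ring

theorem sum_sq_inner_col_le_frobSq {K : Type*} [Fintype K] {u : K → EuclideanSpace ℝ (Fin M)}
    (hu : Orthonormal ℝ u) (U : Matrix (Fin M) (Fin H) ℝ) :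
    ∑ k, ∑ h, ⟪u k, toLp 2 (Uᵀ h)⟫_ℝ ^ 2 ≤ frobSq U := by
  rw [frobSq_eq_sum_norm_sq_col, Finset.sum_comm]
  gcongr with h
  simpa [Real.norm_eq_abs, sq_abs] using hu.sum_inner_products_le (toLp 2 (Uᵀ h)) (s := .univ)

theorem sum_inner_mul_transpose_mulVec_le {K : Type*} [Fintype K]
    {u : K → EuclideanSpace ℝ (Fin M)} {v : K → EuclideanSpace ℝ (Fin N)}
    (hu : Orthonormal ℝ u) (hv : Orthonormal ℝ v)
    (U : Matrix (Fin M) (Fin H) ℝ) (V : Matrix (Fin N) (Fin H) ℝ) :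
    ∑ k, ⟪u k, toLp 2 ((U * Vᵀ) *ᵥ v k)⟫_ℝ ≤ (frobSq U + frobSq V) / 2 := by
  have hU := sum_sq_inner_col_le_frobSq hu U
  have hV := sum_sq_inner_col_le_frobSq hv V
  calc ∑ k, ⟪u k, toLp 2 ((U * Vᵀ) *ᵥ v k)⟫_ℝ
      = ∑ k, ∑ h, ⟪u k, toLp 2 (Uᵀ h)⟫_ℝ * ⟪v k, toLp 2 (Vᵀ h)⟫_ℝ := by
        simp only [inner_mul_transpose_mulVec]
    _ ≤ ∑ k, ∑ h, (⟪u k, toLp 2 (Uᵀ h)⟫_ℝ ^ 2 + ⟪v k, toLp 2 (Vᵀ h)⟫_ℝ ^ 2) / 2 := by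
        gcongr with k _ h _
        linarith [two_mul_le_add_sq ⟪u k, toLp 2 (Uᵀ h)⟫_ℝ ⟪v k, toLp 2 (Vᵀ h)⟫_ℝ]
    _ = (∑ k, ∑ h, ⟪u k, toLp 2 (Uᵀ h)⟫_ℝ ^ 2 + ∑ k, ∑ h, ⟪v k, toLp 2 (Vᵀ h)⟫_ℝ ^ 2) / 2 := by
        simp only [← Finset.sum_div, Finset.sum_add_distrib]
    _ ≤ (frobSq U + frobSq V) / 2 := by gcongr

theorem exists_mul_transpose_eq_sum_vecMulVec {K : Type*} [Fintype K] (hK : Fintype.card K ≤ H)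
    (a : K → EuclideanSpace ℝ (Fin M)) (c : K → EuclideanSpace ℝ (Fin N)) :
    ∃ (U : Matrix (Fin M) (Fin H) ℝ) (V : Matrix (Fin N) (Fin H) ℝ),
      U * Vᵀ = ∑ k, vecMulVec (a k) (c k) ∧
        frobSq U = ∑ k, ‖a k‖ ^ 2 ∧ frobSq V = ∑ k, ‖c k‖ ^ 2 := by
  obtain ⟨e⟩ := Function.Embedding.nonempty_of_card_le (hK.trans (Fintype.card_fin H).ge)
  set A := Function.extend e a 0
  set C := Function.extend e c 0
  have hA (k : K) : A (e k) = a k := e.injective.extend_apply _ _ _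
  have hC (k : K) : C (e k) = c k := e.injective.extend_apply _ _ _
  have hA0 (h : Fin H) (hh : h ∉ Set.range e) : A h = 0 := Function.extend_apply' _ _ _ hh
  have hC0 (h : Fin H) (hh : h ∉ Set.range e) : C h = 0 := Function.extend_apply' _ _ _ hh
  refine ⟨(of fun h => ofLp (A h))ᵀ, (of fun h => ofLp (C h))ᵀ, ?_, ?_, ?_⟩
  · ext i j
    simp only [mul_apply, transpose_transpose, transpose_apply, of_apply, Matrix.sum_apply,
      vecMulVec_apply]
    refine (Fintype.sum_of_injective e e.injective _ _ (fun h hh => ?_) fun k => ?_).symm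
    · simp [hA0 h hh]
    · simp [hA, hC]
  · exact (frobSq_eq_sum_norm_sq_col _).trans (Fintype.sum_of_injective e e.injective
      (fun k => ‖a k‖ ^ 2) (fun h => ‖A h‖ ^ 2) (fun h hh => by simp [hA0 h hh])
      fun k => by simp [hA]).symm
  · exact (frobSq_eq_sum_norm_sq_col _).trans (Fintype.sum_of_injective e e.injective
      (fun k => ‖c k‖ ^ 2) (fun h => ‖C h‖ ^ 2) (fun h hh => by simp [hC0 h hh])
      fun k => by simp [hC]).symm

end Factorization

section SingularVectors

variable {M N : ℕ} (X : Matrix (Fin M) (Fin N) ℝ)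

theorem inner_mulVec_gramEigenbasis (i j : Fin N) :
    ⟪toLp 2 (X *ᵥ gramEigenbasis X i), toLp 2 (X *ᵥ gramEigenbasis X j)⟫_ℝ =
      if i = j then gramEigenvalues X i else 0 := by
  have hX : Xᴴ = Xᵀ := conjTranspose_eq_transpose_of_trivial X
  rw [EuclideanSpace.inner_toLp_toLp, star_trivial, dotProduct_mulVec, ← mulVec_transpose,
    ← hX, mulVec_mulVec, (isHermitian_conjTranspose_mul_self X).mulVec_eigenvectorBasis,
    smul_dotProduct, ← star_trivial (ofLp (gramEigenbasis X i)),
    ← EuclideanSpace.inner_eq_star_dotProduct, OrthonormalBasis.inner_eq_ite]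
  split_ifs with h
  · subst h
    exact mul_one _
  · exact mul_zero _

theorem norm_mulVec_gramEigenbasis (i : Fin N) :
    ‖toLp 2 (X *ᵥ gramEigenbasis X i)‖ = √(gramEigenvalues X i) := by
  rw [norm_eq_sqrt_real_inner, inner_mulVec_gramEigenbasis, if_pos rfl]

theorem mulVec_gramEigenbasis_eq_zero {i : Fin N} (hi : gramEigenvalues X i = 0) :
    X *ᵥ gramEigenbasis X i = 0 := by
  simpa [hi] using norm_mulVec_gramEigenbasis X i

/-- Zero where `gramEigenvalues X i = 0`, since `0⁻¹ = 0` and then `X *ᵥ gramEigenbasis X i = 0`. -/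
noncomputable def leftSingularVector (i : Fin N) : EuclideanSpace ℝ (Fin M) :=
  (√(gramEigenvalues X i))⁻¹ • toLp 2 (X *ᵥ gramEigenbasis X i)

theorem sqrt_smul_leftSingularVector (i : Fin N) :
    √(gramEigenvalues X i) • leftSingularVector X i = toLp 2 (X *ᵥ gramEigenbasis X i) := by
  rcases eq_or_ne (√(gramEigenvalues X i)) 0 with h | h
  · rw [h, zero_smul, eq_comm, ← norm_eq_zero, norm_mulVec_gramEigenbasis, h]
  · rw [leftSingularVector, smul_inv_smul₀ h]

theorem inner_leftSingularVector_mulVec (i : Fin N) :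
    ⟪leftSingularVector X i, toLp 2 (X *ᵥ gramEigenbasis X i)⟫_ℝ = √(gramEigenvalues X i) := by
  rw [leftSingularVector, real_inner_smul_left, real_inner_self_eq_norm_sq,
    norm_mulVec_gramEigenbasis, sq, ← mul_assoc, inv_mul_mul_self]

theorem orthonormal_leftSingularVector :
    Orthonormal ℝ fun k : {i // gramEigenvalues X i ≠ 0} => leftSingularVector X k := by
  rw [orthonormal_iff_ite]
  rintro ⟨i, hi⟩ ⟨j, hj⟩
  simp only [leftSingularVector, real_inner_smul_left, real_inner_smul_right,
    inner_mulVec_gramEigenbasis, Subtype.mk.injEq]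
  split_ifs with h
  · subst h
    rw [← mul_assoc, ← mul_inv, ← sq, Real.sq_sqrt (gramEigenvalues_nonneg X i),
      inv_mul_cancel₀ hi]
  · simp

theorem sum_vecMulVec_mulVec_gramEigenbasis :
    ∑ i, vecMulVec (X *ᵥ gramEigenbasis X i) (gramEigenbasis X i) = X := by
  set P := (isHermitian_conjTranspose_mul_self X).eigenvectorUnitary
  have hP : ∑ i, vecMulVec (gramEigenbasis X i) (gramEigenbasis X i) =
      (P : Matrix (Fin N) (Fin N) ℝ) * star (P : Matrix (Fin N) (Fin N) ℝ) := by
    ext l c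
    simp [mul_apply, vecMulVec_apply, Matrix.sum_apply, P]
    rfl
  simp_rw [← mul_vecMulVec]
  rw [← Matrix.mul_sum, hP, Unitary.mul_star_self_of_mem P.2, Matrix.mul_one]

theorem sum_subtype_gramEigenvalues_ne_zero {β : Type*} [AddCommMonoid β] (f : Fin N → β)
    (hf : ∀ i, gramEigenvalues X i = 0 → f i = 0) :
    ∑ k : {i // gramEigenvalues X i ≠ 0}, f k = ∑ i, f i :=
  Fintype.sum_of_injective _ Subtype.val_injective _ _
    (fun i hi => hf i (by simpa using hi)) fun _ => rfl

theorem nucNorm_mul_transpose_le {H : ℕ} (U : Matrix (Fin M) (Fin H) ℝ)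
    (V : Matrix (Fin N) (Fin H) ℝ) : nucNorm (U * Vᵀ) ≤ (frobSq U + frobSq V) / 2 :=
  calc nucNorm (U * Vᵀ)
      = ∑ k : {i // gramEigenvalues (U * Vᵀ) i ≠ 0}, ⟪leftSingularVector (U * Vᵀ) k,
          toLp 2 ((U * Vᵀ) *ᵥ gramEigenbasis (U * Vᵀ) k)⟫_ℝ := by
        simp only [inner_leftSingularVector_mulVec, nucNorm_eq_sum_sqrt_gramEigenvalues]
        exact (sum_subtype_gramEigenvalues_ne_zero _ _ fun i hi => by simp [hi]).symm
    _ ≤ (frobSq U + frobSq V) / 2 :=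
        sum_inner_mul_transpose_mulVec_le (orthonormal_leftSingularVector _)
          ((gramEigenbasis _).orthonormal.comp _ Subtype.val_injective) U V

theorem exists_mul_transpose_eq_frobSq_eq_nucNorm {H : ℕ} (hrank : X.rank ≤ H) :
    ∃ (U : Matrix (Fin M) (Fin H) ℝ) (V : Matrix (Fin N) (Fin H) ℝ),
      U * Vᵀ = X ∧ frobSq U = nucNorm X ∧ frobSq V = nucNorm X := by
  set σ := fun i => √(gramEigenvalues X i)
  obtain ⟨U, V, hUV, hU, hV⟩ := exists_mul_transpose_eq_sum_vecMulVec
    ((card_gramEigenvalues_ne_zero X).trans_le hrank)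
    (fun k => √(σ k) • leftSingularVector X k) (fun k => √(σ k) • gramEigenbasis X k)
  have norm_sq {m : ℕ} {t : ℝ} (ht : 0 ≤ t) {x : EuclideanSpace ℝ (Fin m)} (hx : ‖x‖ = 1) :
      ‖√t • x‖ ^ 2 = t := by
    rw [norm_smul, hx, mul_one, Real.norm_of_nonneg (Real.sqrt_nonneg t), Real.sq_sqrt ht]
  refine ⟨U, V, ?_, ?_, ?_⟩
  · calc U * Vᵀ = ∑ k : {i // gramEigenvalues X i ≠ 0},
          vecMulVec (X *ᵥ gramEigenbasis X k) (gramEigenbasis X k) := by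
          rw [hUV]
          refine Fintype.sum_congr _ _ fun k => ?_
          rw [ofLp_smul, ofLp_smul, smul_vecMulVec, vecMulVec_smul, smul_smul,
            Real.mul_self_sqrt (Real.sqrt_nonneg _), ← smul_vecMulVec, ← ofLp_smul,
            sqrt_smul_leftSingularVector]
      _ = X := (sum_subtype_gramEigenvalues_ne_zero X
            (fun i => vecMulVec (X *ᵥ gramEigenbasis X i) (gramEigenbasis X i)) fun i hi => by
              rw [mulVec_gramEigenbasis_eq_zero X hi, zero_vecMulVec]).trans
            (sum_vecMulVec_mulVec_gramEigenbasis X)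
  · rw [hU, nucNorm_eq_sum_sqrt_gramEigenvalues, ← sum_subtype_gramEigenvalues_ne_zero X _
      fun i hi => by rw [hi, Real.sqrt_zero]]
    exact Fintype.sum_congr _ _ fun k =>
      norm_sq (Real.sqrt_nonneg _) ((orthonormal_leftSingularVector X).1 k)
  · rw [hV, nucNorm_eq_sum_sqrt_gramEigenvalues, ← sum_subtype_gramEigenvalues_ne_zero X _
      fun i hi => by rw [hi, Real.sqrt_zero]]
    exact Fintype.sum_congr _ _ fun k =>
      norm_sq (Real.sqrt_nonneg _) ((gramEigenbasis X).orthonormal.1 k)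

end SingularVectors

theorem statement2_general {M N : ℕ} (H : ℕ)
    (S : Matrix (Fin M) (Fin N) ℝ) (hrank : S.rank ≤ H) :
    IsLeast { c : ℝ | ∃ (U : Matrix (Fin M) (Fin H) ℝ) (V : Matrix (Fin N) (Fin H) ℝ),
        U * Vᵀ = S ∧ c = (frobSq U + frobSq V) / 2 }
      (nucNorm S) := by
  constructor
  · obtain ⟨U, V, hUV, hU, hV⟩ := exists_mul_transpose_eq_frobSq_eq_nucNorm S hrank
    exact ⟨U, V, hUV, by rw [hU, hV, add_self_div_two]⟩
  · rintro c ⟨U, V, rfl, rfl⟩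
    exact nucNorm_mul_transpose_le U V

/-- The nuclear norm of `S` equals the minimum of `(frobSq U + frobSq V) / 2` over all
factorizations `S = U * Vᵀ` with `H` latent columns, where `H ≥ rank S`; in particular
the minimum is attained. -/
theorem statement2 {M N : ℕ} (H : ℕ) (hH : 0 < H)
    (S : Matrix (Fin M) (Fin N) ℝ) (hrank : S.rank ≤ H) :
    IsLeast { c : ℝ | ∃ (U : Matrix (Fin M) (Fin H) ℝ) (V : Matrix (Fin N) (Fin H) ℝ),
        U * Vᵀ = S ∧ c = (frobSq U + frobSq V) / 2 }
      (nucNorm S) :=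
  statement2_general H S hrank
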